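/- Let f(x,y) = Σ_{i=1}^t b_i x^{β_i} y^{γ_i} be a real polynomial with t nonzero terms, ordered so that γ_1 ≤ γ_2 ≤ ... ≤ γ_t. If V(f(x, x+1)) = 2t - 2, then for every i = 1, ..., t-1 one has β_t < β_i and β_i + γ_i < β_t + γ_t. -/

import Mathlib

open Polynomial

/-- Number of sign changes in the coefficient sequence, disregarding zeros. -/
noncomputable def signVar (p : Polynomial ℝ) : ℕ :=
  let l := (((List.range (p.natDegree + 1)).map fun i => p.coeff i).filter fun a => a ≠ 0)
  (l.zip l.tail).countP fun q => q.1 * q.2 < 0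

/-- Substitution y = x + 1 into a bivariate polynomial. -/
noncomputable def subXX1 (f : MvPolynomial (Fin 2) ℝ) : Polynomial ℝ :=
  MvPolynomial.aeval ![Polynomial.X, Polynomial.X + 1] f

/-- `T3 d h = (x+1)^d * h(-x/(x+1))` as a polynomial. -/
noncomputable def T3 (d : ℕ) (h : Polynomial ℝ) : Polynomial ℝ :=
  ∑ i ∈ Finset.range (d + 1),
    Polynomial.C (h.coeff i) * (-Polynomial.X) ^ i * (Polynomial.X + 1) ^ (d - i)

noncomputable def VI1 (h : Polynomial ℝ) : ℕ := signVar h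
noncomputable def VI2 (h : Polynomial ℝ) : ℕ := signVar (h.comp (-1 - Polynomial.X))
noncomputable def VI3 (h : Polynomial ℝ) : ℕ := signVar (T3 h.natDegree h)

/-!
Write `P_i = ∑_{j ≥ i} b_j x^{β_j} (x+1)^{γ_j - γ_i}`, so that `f(x, x+1) = (x+1)^{γ_1} P_1` and
`P_i = b_i x^{β_i} + (x+1)^{γ_{i+1} - γ_i} P_{i+1}`. Multiplying by `x + 1` never creates sign
changes, and adding a monomial `c x^a` creates at most two, and at most one unless the polynomial
has nonzero coefficients both below and above degree `a`. Hence `V(f(x, x+1)) ≤ V(P_1) ≤ 2t - 2`,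
and when equality holds every step gains exactly two sign changes: for each `i < t` the polynomial
`(x+1)^{γ_{i+1} - γ_i} P_{i+1}` has nonzero coefficients in some degree below `β_i` and some degree
above `β_i`. Its coefficients live in degrees `[β_j, β_j + γ_j - γ_i]` with `j > i`, so downward
induction on `i` gives `β_t < β_i` and `β_i + γ_i < β_t + γ_t`.
-/

namespace List

noncomputable def signChanges (l : List ℝ) : ℕ :=
  (l.zip l.tail).countP fun q => q.1 * q.2 < 0

noncomputable def signVar (l : List ℝ) : ℕ :=
  (l.filter fun a => a ≠ 0).signChanges

/-- `0` if all entries vanish. -/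
noncomputable def firstNonzero (l : List ℝ) : ℝ :=
  (l.filter fun a => a ≠ 0).headD 0

@[simp] theorem signChanges_nil : signChanges [] = 0 := rfl

@[simp] theorem signChanges_singleton (a : ℝ) : [a].signChanges = 0 := rfl

theorem signChanges_cons_cons (a b : ℝ) (l : List ℝ) :
    (a :: b :: l).signChanges = (b :: l).signChanges + if a * b < 0 then 1 else 0 := by
  simp [signChanges, countP_cons]

theorem signChanges_cons_le (a : ℝ) (l : List ℝ) :
    (a :: l).signChanges ≤ l.signChanges + 1 := by
  cases l with
  | nil => simp
  | cons b l => rw [signChanges_cons_cons]; split_ifs <;> omega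

theorem signChanges_add_signChanges_le (A B : List ℝ) :
    A.signChanges + B.signChanges ≤ (A ++ B).signChanges := by
  induction A with
  | nil => simp
  | cons a A ih =>
    cases A with
    | nil => cases B <;> simp [signChanges_cons_cons]
    | cons a' A =>
      simp only [cons_append, signChanges_cons_cons] at ih ⊢
      omega

theorem signChanges_append_le (A B : List ℝ) :
    (A ++ B).signChanges ≤ A.signChanges + B.signChanges + 1 := by
  induction A with
  | nil => simp
  | cons a A ih =>
    cases A with
    | nil => simpa using signChanges_cons_le a B
    | cons a' A =>
      simp only [cons_append, signChanges_cons_cons] at ih ⊢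
      omega

theorem signVar_cons (x : ℝ) (l : List ℝ) :
    (x :: l).signVar = l.signVar + if x * l.firstNonzero < 0 then 1 else 0 := by
  by_cases hx : x = 0
  · simp [signVar, hx]
  · rw [signVar, signVar, firstNonzero, filter_cons_of_pos (by simpa using hx)]
    cases l.filter (fun a => a ≠ 0) with
    | nil => simp
    | cons y F => rw [signChanges_cons_cons]; rfl

theorem firstNonzero_cons (x : ℝ) (l : List ℝ) :
    (x :: l).firstNonzero = if x = 0 then l.firstNonzero else x := by
  by_cases hx : x = 0 <;> simp [firstNonzero, hx]

@[simp] theorem signVar_nil : signVar [] = 0 := rfl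

@[simp] theorem signVar_singleton (x : ℝ) : [x].signVar = 0 := by
  simp [signVar_cons, firstNonzero]

theorem signVar_le_signVar_cons (x : ℝ) (l : List ℝ) : l.signVar ≤ (x :: l).signVar := by
  rw [signVar_cons]; omega

theorem signVar_cons_le (x : ℝ) (l : List ℝ) : (x :: l).signVar ≤ l.signVar + 1 := by
  rw [signVar_cons]; split_ifs <;> omega

theorem signVar_add_signVar_le (A B : List ℝ) : A.signVar + B.signVar ≤ (A ++ B).signVar := by
  simpa only [signVar, filter_append] using signChanges_add_signChanges_le _ _

theorem signVar_append_le (A B : List ℝ) : (A ++ B).signVar ≤ A.signVar + B.signVar + 1 := by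
  simpa only [signVar, filter_append] using signChanges_append_le _ _

theorem signVar_append_of_forall_eq_zero_left {A : List ℝ} (hA : ∀ z ∈ A, z = 0)
    (B : List ℝ) : (A ++ B).signVar = B.signVar := by
  have hA' : A.filter (fun a => a ≠ 0) = [] := filter_eq_nil_iff.2 (by simpa using hA)
  rw [signVar, filter_append, hA', nil_append, signVar]

theorem signVar_append_of_forall_eq_zero_right (A : List ℝ) {B : List ℝ}
    (hB : ∀ z ∈ B, z = 0) : (A ++ B).signVar = A.signVar := by
  have hB' : B.filter (fun a => a ≠ 0) = [] := filter_eq_nil_iff.2 (by simpa using hB)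
  rw [signVar, filter_append, hB', append_nil, signVar]

theorem signVar_append_cons_le_add_two (L R : List ℝ) (x y : ℝ) :
    (L ++ x :: R).signVar ≤ (L ++ y :: R).signVar + 2 := by
  have := signVar_append_le L (x :: R)
  have := signVar_cons_le x R
  have := signVar_add_signVar_le L (y :: R)
  have := signVar_le_signVar_cons y R
  omega

theorem signVar_append_cons_le_add_one_of_left {L : List ℝ} (hL : ∀ z ∈ L, z = 0)
    (R : List ℝ) (x y : ℝ) : (L ++ x :: R).signVar ≤ (L ++ y :: R).signVar + 1 := by
  rw [signVar_append_of_forall_eq_zero_left hL, signVar_append_of_forall_eq_zero_left hL]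
  exact (signVar_cons_le x R).trans (by simpa using signVar_le_signVar_cons y R)

theorem signVar_append_cons_le_add_one_of_right (L : List ℝ) {R : List ℝ}
    (hR : ∀ z ∈ R, z = 0) (x y : ℝ) : (L ++ x :: R).signVar ≤ (L ++ y :: R).signVar + 1 := by
  have hx : (x :: R).signVar = 0 := by
    simpa using signVar_append_of_forall_eq_zero_right [x] hR
  have := signVar_append_le L (x :: R)
  have := signVar_add_signVar_le L (y :: R)
  omega

theorem firstNonzero_cons_add_cons (p a : ℝ) (l : List ℝ) :
    (p :: (p + a) :: l).firstNonzero = (p :: a :: l).firstNonzero := by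
  by_cases hp : p = 0 <;> simp [firstNonzero_cons, hp]

/- A case analysis on the signs of `p`, `a`, `p + a` and `l.firstNonzero`: `p + a` vanishes or
has the sign of `p` or of `a`. -/
theorem signVar_cons_add_cons_le (p a : ℝ) (l : List ℝ) :
    (p :: (p + a) :: l).signVar ≤ (p :: a :: l).signVar := by
  simp only [signVar_cons, firstNonzero_cons, mul_neg_iff]
  split_ifs <;> grind

/- `p :: zipWith (· + ·) (p :: l) l` is the coefficient list of `(1 + x) (p + x l(x))` with its
last entry dropped. -/
theorem firstNonzero_cons_zipWith_add (l : List ℝ) (p : ℝ) :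
    (p :: zipWith (· + ·) (p :: l) l).firstNonzero = (p :: l).firstNonzero := by
  induction l generalizing p with
  | nil => rfl
  | cons a l ih =>
    rw [zipWith_cons_cons, firstNonzero_cons_add_cons, firstNonzero_cons p, ih,
      ← firstNonzero_cons]

theorem signVar_cons_zipWith_add_le (l : List ℝ) (p : ℝ) :
    (p :: zipWith (· + ·) (p :: l) l).signVar ≤ (p :: l).signVar := by
  induction l generalizing p with
  | nil => simp
  | cons a l ih =>
    rw [zipWith_cons_cons]
    refine (signVar_cons_add_cons_le p a _).trans ?_
    rw [signVar_cons p, signVar_cons p, firstNonzero_cons_zipWith_add]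
    have := ih a
    omega

theorem signVar_zipWith_add_le (l : List ℝ) :
    (zipWith (· + ·) (0 :: l) l).signVar ≤ l.signVar := by
  simpa [signVar_cons] using signVar_cons_zipWith_add_le l 0

end List

theorem signVar_eq_signVar_map_coeff {p : ℝ[X]} {n : ℕ} (hn : p.natDegree ≤ n) :
    signVar p = ((List.range (n + 1)).map p.coeff).signVar := by
  obtain ⟨m, rfl⟩ := Nat.exists_eq_add_of_le hn
  rw [show p.natDegree + m + 1 = p.natDegree + 1 + m by omega, List.range_add, List.map_append,
    List.signVar_append_of_forall_eq_zero_right]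
  · rfl
  · simp only [List.map_map, List.mem_map, List.mem_range, Function.comp_apply]
    rintro _ ⟨k, -, rfl⟩
    exact coeff_eq_zero_of_natDegree_lt (by omega)

theorem map_coeff_X_add_one_mul (q : ℝ[X]) (n : ℕ) :
    (List.range n).map ((X + 1) * q).coeff =
      List.zipWith (· + ·) (0 :: (List.range n).map q.coeff) ((List.range n).map q.coeff) := by
  refine List.ext_getElem (by simp) fun k _ _ => ?_
  cases k <;> simp [add_mul, coeff_X_mul]

theorem signVar_X_add_one_mul_le (q : ℝ[X]) : signVar ((X + 1) * q) ≤ signVar q := by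
  have hdeg : ((X + 1) * q).natDegree ≤ q.natDegree + 1 := by
    refine natDegree_mul_le.trans ?_
    have : (X + 1 : ℝ[X]).natDegree ≤ 1 := by compute_degree
    omega
  rw [signVar_eq_signVar_map_coeff hdeg, signVar_eq_signVar_map_coeff (Nat.le_succ _),
    map_coeff_X_add_one_mul]
  exact List.signVar_zipWith_add_le _

theorem signVar_X_add_one_pow_mul_le (m : ℕ) (q : ℝ[X]) :
    signVar ((X + 1) ^ m * q) ≤ signVar q := by
  induction m generalizing q with
  | zero => simp
  | succ m ih =>
    rw [pow_succ, mul_assoc]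
    exact (ih _).trans (signVar_X_add_one_mul_le q)

theorem exists_signVar_C_mul_X_pow_add_eq (p : ℝ[X]) (c : ℝ) (a : ℕ) :
    ∃ L R : List ℝ, (∀ z ∈ L, ∃ k < a, p.coeff k = z) ∧ (∀ z ∈ R, ∃ k, a < k ∧ p.coeff k = z) ∧
      signVar p = (L ++ p.coeff a :: R).signVar ∧
      signVar (C c * X ^ a + p) = (L ++ (c + p.coeff a) :: R).signVar := by
  have hsplit : ∀ q : ℝ[X], q.natDegree ≤ a + p.natDegree → (∀ k ≠ a, q.coeff k = p.coeff k) →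
      signVar q = ((List.range a).map p.coeff ++
        q.coeff a :: (List.range p.natDegree).map fun k => p.coeff (a + 1 + k)).signVar := by
    intro q hq hpq
    rw [signVar_eq_signVar_map_coeff hq, add_assoc, List.range_add, List.range_succ_eq_map,
      List.map_append]
    congr 2
    · exact List.map_congr_left fun k hk => hpq k (by rw [List.mem_range] at hk; omega)
    · simp only [List.map_cons, List.map_map, add_zero, Function.comp_def]
      congr 1
      exact List.map_congr_left fun k _ => by rw [hpq _ (by omega)]; congr 1; omega
  have hdeg : (C c * X ^ a + p).natDegree ≤ a + p.natDegree :=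
    (natDegree_add_le _ _).trans
      (max_le ((natDegree_C_mul_X_pow_le c a).trans (Nat.le_add_right _ _)) (Nat.le_add_left _ _))
  refine ⟨_, _, ?_, ?_, hsplit p (Nat.le_add_left _ _) fun _ _ => rfl,
    (hsplit _ hdeg fun k hk => by simp [hk]).trans (by simp)⟩
  · simp
  · simp only [List.mem_map, List.mem_range]
    exact fun z ⟨k, _, hz⟩ => ⟨a + 1 + k, by omega, hz⟩

theorem signVar_C_mul_X_pow (c : ℝ) (a : ℕ) : signVar (C c * X ^ a) = 0 := by
  rw [signVar_eq_signVar_map_coeff (natDegree_C_mul_X_pow_le c a), List.range_succ,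
    List.map_append, List.signVar_append_of_forall_eq_zero_left]
  · simp
  · simp +contextual [Nat.ne_of_lt]

section AddMonomial

variable {p : ℝ[X]} {c : ℝ} {a : ℕ}

theorem signVar_C_mul_X_pow_add_le : signVar (C c * X ^ a + p) ≤ signVar p + 2 := by
  obtain ⟨L, R, -, -, hp, hq⟩ := exists_signVar_C_mul_X_pow_add_eq p c a
  rw [hp, hq]
  exact List.signVar_append_cons_le_add_two ..

theorem signVar_C_mul_X_pow_add_le_of_forall_lt (hp : ∀ k < a, p.coeff k = 0) :
    signVar (C c * X ^ a + p) ≤ signVar p + 1 := by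
  obtain ⟨L, R, hL, -, hp', hq⟩ := exists_signVar_C_mul_X_pow_add_eq p c a
  rw [hp', hq]
  refine List.signVar_append_cons_le_add_one_of_left (fun z hz => ?_) ..
  obtain ⟨k, hk, rfl⟩ := hL z hz
  exact hp k hk

theorem signVar_C_mul_X_pow_add_le_of_forall_gt (hp : ∀ k, a < k → p.coeff k = 0) :
    signVar (C c * X ^ a + p) ≤ signVar p + 1 := by
  obtain ⟨L, R, -, hR, hp', hq⟩ := exists_signVar_C_mul_X_pow_add_eq p c a
  rw [hp', hq]
  refine List.signVar_append_cons_le_add_one_of_right _ (fun z hz => ?_) ..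
  obtain ⟨k, hk, rfl⟩ := hR z hz
  exact hp k hk

theorem exists_coeff_ne_zero_of_signVar_add_two_le
    (h : signVar p + 2 ≤ signVar (C c * X ^ a + p)) :
    (∃ k < a, p.coeff k ≠ 0) ∧ ∃ k, a < k ∧ p.coeff k ≠ 0 := by
  constructor <;> by_contra! hp
  · have := signVar_C_mul_X_pow_add_le_of_forall_lt (c := c) hp
    omega
  · have := signVar_C_mul_X_pow_add_le_of_forall_gt (c := c) hp
    omega

end AddMonomial

/-- `(x + 1)^{-g} f(x, x + 1)` for `f = ∑ bᵢ x^βᵢ y^γᵢ`, when `g ≤ γᵢ` for all `i`. -/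
noncomputable def shiftedSum {n : ℕ} (b : Fin n → ℝ) (β γ : Fin n → ℕ) (g : ℕ) : ℝ[X] :=
  ∑ i, C (b i) * X ^ β i * (X + 1) ^ (γ i - g)

section ShiftedSum

variable {n : ℕ} (b : Fin n → ℝ) (β γ : Fin n → ℕ)

theorem shiftedSum_eq_X_add_one_pow_mul {g g' : ℕ} (hg : g ≤ g') (hγ : ∀ i, g' ≤ γ i) :
    shiftedSum b β γ g = (X + 1) ^ (g' - g) * shiftedSum b β γ g' := by
  rw [shiftedSum, shiftedSum, Finset.mul_sum]
  refine Finset.sum_congr rfl fun i _ => ?_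
  rw [show γ i - g = (γ i - g') + (g' - g) by have := hγ i; omega, pow_add]
  ring

theorem exists_le_le_of_coeff_shiftedSum_ne_zero {g k : ℕ}
    (h : (shiftedSum b β γ g).coeff k ≠ 0) : ∃ i, β i ≤ k ∧ k ≤ β i + (γ i - g) := by
  rw [shiftedSum, finsetSum_coeff] at h
  obtain ⟨i, -, hi⟩ := Finset.exists_ne_zero_of_sum_ne_zero h
  rw [mul_comm (C _), mul_assoc, coeff_X_pow_mul'] at hi
  split_ifs at hi with hk
  · have hdeg : (C (b i) * (X + 1) ^ (γ i - g)).natDegree ≤ γ i - g := by compute_degree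
    have := le_natDegree_of_ne_zero hi
    exact ⟨i, hk, by omega⟩
  · exact absurd rfl hi

end ShiftedSum

section ShiftedSumSucc

variable {t : ℕ} (b : Fin (t + 2) → ℝ) (β γ : Fin (t + 2) → ℕ)

theorem shiftedSum_eq_C_mul_X_pow_add_tail :
    shiftedSum b β γ (γ 0) =
      C (b 0) * X ^ β 0 + shiftedSum (Fin.tail b) (Fin.tail β) (Fin.tail γ) (γ 0) := by
  simp [shiftedSum, Fin.sum_univ_succ, Fin.tail]

theorem signVar_shiftedSum_tail_le (hγ : Monotone γ) :
    signVar (shiftedSum (Fin.tail b) (Fin.tail β) (Fin.tail γ) (γ 0)) ≤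
      signVar (shiftedSum (Fin.tail b) (Fin.tail β) (Fin.tail γ) (Fin.tail γ 0)) := by
  rw [shiftedSum_eq_X_add_one_pow_mul _ _ (Fin.tail γ) (hγ (Fin.zero_le _))
    fun i => hγ (Fin.succ_le_succ_iff.2 (Fin.zero_le i))]
  exact signVar_X_add_one_pow_mul_le _ _

end ShiftedSumSucc

theorem signVar_shiftedSum_le {t : ℕ} (b : Fin (t + 1) → ℝ) (β γ : Fin (t + 1) → ℕ)
    (hγ : Monotone γ) : signVar (shiftedSum b β γ (γ 0)) ≤ 2 * t := by
  induction t with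
  | zero => simp [shiftedSum, signVar_C_mul_X_pow]
  | succ t ih =>
    have hS := shiftedSum_eq_C_mul_X_pow_add_tail b β γ ▸ signVar_C_mul_X_pow_add_le
    have hG := signVar_shiftedSum_tail_le b β γ hγ
    have := ih (Fin.tail b) (Fin.tail β) (Fin.tail γ) (hγ.comp Fin.strictMono_succ.monotone)
    omega

theorem lt_of_signVar_shiftedSum_eq {t : ℕ} (b : Fin (t + 1) → ℝ) (β γ : Fin (t + 1) → ℕ)
    (hγ : Monotone γ) (h : signVar (shiftedSum b β γ (γ 0)) = 2 * t) (i : Fin (t + 1))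
    (hi : i ≠ Fin.last t) :
    β (Fin.last t) < β i ∧ β i + γ i < β (Fin.last t) + γ (Fin.last t) := by
  induction t with
  | zero => exact absurd (Fin.ext (by simp)) hi
  | succ t ih =>
    have hγ' : Monotone (Fin.tail γ) := hγ.comp Fin.strictMono_succ.monotone
    rw [shiftedSum_eq_C_mul_X_pow_add_tail] at h
    have hS := signVar_C_mul_X_pow_add_le (c := b 0) (a := β 0)
      (p := shiftedSum (Fin.tail b) (Fin.tail β) (Fin.tail γ) (γ 0))
    have hG := signVar_shiftedSum_tail_le b β γ hγ
    have hS' := signVar_shiftedSum_le (Fin.tail b) (Fin.tail β) (Fin.tail γ) hγ'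
    have ihT := ih (Fin.tail b) (Fin.tail β) (Fin.tail γ) hγ' (by omega)
    simp only [Fin.tail, Fin.succ_last] at ihT
    have htail : ∀ j : Fin (t + 1), β (Fin.last (t + 1)) ≤ β j.succ ∧
        β j.succ + γ j.succ ≤ β (Fin.last (t + 1)) + γ (Fin.last (t + 1)) := by
      intro j
      by_cases hj : j = Fin.last t
      · simp [hj]
      · exact ⟨(ihT j hj).1.le, (ihT j hj).2.le⟩
    obtain ⟨⟨k, hk, hk0⟩, ⟨k', hk', hk'0⟩⟩ :=
      exists_coeff_ne_zero_of_signVar_add_two_le (c := b 0) (a := β 0)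
        (p := shiftedSum (Fin.tail b) (Fin.tail β) (Fin.tail γ) (γ 0)) (by omega)
    obtain ⟨j, hj⟩ := exists_le_le_of_coeff_shiftedSum_ne_zero _ _ _ hk0
    obtain ⟨j', hj'⟩ := exists_le_le_of_coeff_shiftedSum_ne_zero _ _ _ hk'0
    induction i using Fin.cases with
    | zero =>
      have := htail j
      have := htail j'
      have : γ 0 ≤ γ j'.succ := hγ (Fin.zero_le _)
      dsimp only [Fin.tail] at hj hj'
      omega
    | succ i => exact ihT i fun hi' => hi (by rw [hi', Fin.succ_last])

theorem stmt4 (t : ℕ) (ht : 0 < t) (b : Fin t → ℝ) (β γ : Fin t → ℕ)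
    (hmono : Monotone γ)
    (h : (signVar (∑ i, Polynomial.C (b i) * Polynomial.X ^ β i *
          (Polynomial.X + 1) ^ γ i) : ℤ) = 2 * t - 2) :
    ∀ i : Fin t, (i : ℕ) < t - 1 →
      β ⟨t - 1, by omega⟩ < β i ∧
        β i + γ i < β ⟨t - 1, by omega⟩ + γ ⟨t - 1, by omega⟩ := by
  obtain ⟨s, rfl⟩ : ∃ s, t = s + 1 := ⟨t - 1, by omega⟩
  have hsum : ∑ i, C (b i) * X ^ β i * (X + 1) ^ γ i =
      (X + 1) ^ γ 0 * shiftedSum b β γ (γ 0) := by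
    have := shiftedSum_eq_X_add_one_pow_mul b β γ (Nat.zero_le _) fun i => hmono (Fin.zero_le i)
    rw [Nat.sub_zero] at this
    rw [← this]
    simp [shiftedSum]
  have hV : signVar (shiftedSum b β γ (γ 0)) = 2 * s := by
    have hle := signVar_X_add_one_pow_mul_le (γ 0) (shiftedSum b β γ (γ 0))
    have := signVar_shiftedSum_le b β γ hmono
    rw [← hsum] at hle
    push_cast at h
    omega
  intro i hi
  have hlast : (⟨s + 1 - 1, by omega⟩ : Fin (s + 1)) = Fin.last s := Fin.ext (by simp)
  rw [hlast]
  exact lt_of_signVar_shiftedSum_eq b β γ hmono hV i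
    (Fin.ne_of_lt (Fin.lt_def.2 (by simpa using hi)))
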